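/- arXiv:2108.02732 — 8 statements merged into one kernel-verified Lean document; each statement's English description precedes it below -/
import Mathlib

section
/- If M₁, ..., Mₙ are pairwise anticommuting Hermitian operators on a finite-dimensional Hilbert space satisfying Mᵢ² = 1 (i.e., with eigenvalues ±1), then for any density matrix ρ, the sum of squared expectation values satisfies ∑ᵢ (Tr(ρ Mᵢ))² ≤ 1. -/
open Matrix
open scoped ComplexOrder

/-! With `tᵢ = Tr(ρ Mᵢ)`, the observable `A = ∑ tᵢ Mᵢ` is Hermitian, and anticommutation gives
`A² = |t|² • 1`. Nonnegativity of the variance `Tr(ρ (A - ⟨A⟩)²)` gives `⟨A⟩² ≤ ⟨A²⟩`, i.e.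
`|t|⁴ ≤ |t|²`, hence `|t|² ≤ 1`. -/

theorem sum_smul_mul_self_of_anticommute {ι R A : Type*} [CommRing R] [Ring A] [Algebra R A]
    (M : ι → A) (hinv : ∀ i, M i * M i = 1)
    (hanti : ∀ i j, i ≠ j → M i * M j = -(M j * M i)) (t : ι → R) (s : Finset ι) :
    (∑ i ∈ s, t i • M i) * (∑ i ∈ s, t i • M i) = (∑ i ∈ s, t i ^ 2) • 1 := by
  classical
  induction s using Finset.induction_on with
  | empty => simp
  | insert a s ha ih =>
    have hcross : (∑ i ∈ s, t i • M i) * M a + M a * (∑ i ∈ s, t i • M i) = 0 := by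
      rw [Finset.sum_mul, Finset.mul_sum, ← Finset.sum_add_distrib]
      refine Finset.sum_eq_zero fun i hi => ?_
      rw [smul_mul_assoc, mul_smul_comm, ← smul_add,
        hanti i a (ne_of_mem_of_not_mem hi ha), neg_add_cancel, smul_zero]
    rw [Finset.sum_insert ha, Finset.sum_insert ha, add_mul, mul_add, mul_add, ih,
      smul_mul_smul_comm, hinv, mul_smul_comm, smul_mul_assoc, add_smul]
    linear_combination (norm := module) t a • hcross

theorem sq_re_trace_mul_le_re_trace_mul_self {m : Type*} [Fintype m] [DecidableEq m]
    {ρ A : Matrix m m ℂ} (hρ : ρ.PosSemidef) (htr : ρ.trace = 1) (hA : A.IsHermitian) :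
    (ρ * A).trace.re ^ 2 ≤ (ρ * (A * A)).trace.re := by
  set s := (ρ * A).trace.re
  set B := A - (s : ℂ) • 1
  have hBherm : Bᴴ = B := by simp [B, hA.eq]
  have hBsq : B * B = A * A - (2 * s : ℝ) • A + (s ^ 2 : ℝ) • 1 := by
    simp only [B, sub_mul, mul_sub, mul_smul_comm, smul_mul_assoc, one_mul, mul_one]
    module
  have hnonneg : 0 ≤ (ρ * (B * B)).trace := by
    have := (hρ.mul_mul_conjTranspose_same B).trace_nonneg
    rwa [hBherm, trace_mul_cycle, trace_mul_comm] at this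
  rw [hBsq, mul_add, mul_sub, mul_smul_comm, mul_smul_comm, mul_one, trace_add, trace_sub,
    trace_smul, trace_smul, htr] at hnonneg
  have hre := (Complex.nonneg_iff.mp hnonneg).1
  simp only [Complex.add_re, Complex.sub_re, Complex.real_smul, Complex.re_ofReal_mul,
    Complex.one_re] at hre
  nlinarith

/-- If `M 1, ..., M n` are pairwise anticommuting Hermitian involutions
(`Mᵢ² = 1`, eigenvalues `±1`) on a finite-dimensional Hilbert space, then for any
density matrix `ρ` the sum of squared expectation values satisfies
`∑ i, (Tr(ρ Mᵢ))² ≤ 1`. -/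
theorem anticommuting_expectation_bound (d n : ℕ)
    (M : Fin n → Matrix (Fin d) (Fin d) ℂ)
    (hherm : ∀ i, (M i).IsHermitian)
    (hinv : ∀ i, M i * M i = 1)
    (hanti : ∀ i j, i ≠ j → M i * M j = - (M j * M i))
    (ρ : Matrix (Fin d) (Fin d) ℂ)
    (hρ : ρ.PosSemidef) (htr : ρ.trace = 1) :
    ∑ i, ((ρ * M i).trace.re) ^ 2 ≤ 1 := by
  set t : Fin n → ℝ := fun i => (ρ * M i).trace.re
  set S := ∑ i, t i ^ 2
  set A := ∑ i, t i • M i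
  have hA : A.IsHermitian :=
    isSelfAdjoint_sum _ fun i _ => (hherm i).smul (IsSelfAdjoint.all (t i))
  have hmean : (ρ * A).trace.re = S := by
    simp [A, S, Finset.mul_sum, trace_sum, Complex.re_sum, t, sq]
  have hsecond : (ρ * (A * A)).trace.re = S := by
    rw [sum_smul_mul_self_of_anticommute M hinv hanti, mul_smul_comm, mul_one, trace_smul, htr,
      Complex.real_smul, mul_one, Complex.ofReal_re]
  have hvar := sq_re_trace_mul_le_re_trace_mul_self hρ htr hA
  rw [hmean, hsecond] at hvar
  nlinarith
end

section
/- For two anticommuting Hermitian involutions M₁ and M₂ (M₁M₂ = −M₂M₁, Mᵢ² = 1) and any quantum state ρ, one has Tr(ρM₁)² + Tr(ρM₂)² ≤ 1. -/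
/-!
With `a = Tr(ρM₁)` and `b = Tr(ρM₂)`, anticommutation makes `M = a M₁ + b M₂` a Hermitian
operator with `M² = (a² + b²) 1`. The variance of `M` in the state `ρ` is nonnegative,
`Tr(ρM)² ≤ Tr(ρM²)`, which reads `(a² + b²)² ≤ a² + b²`.
-/

open Matrix
open scoped ComplexOrder

theorem smul_add_smul_mul_self_of_anticommute {R A : Type*} [CommRing R] [Ring A] [Algebra R A]
    {x y : A} (hx : x * x = 1) (hy : y * y = 1) (hxy : x * y = -(y * x)) (a b : R) :
    (a • x + b • y) * (a • x + b • y) = (a ^ 2 + b ^ 2) • (1 : A) := by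
  simp only [add_mul, mul_add, smul_mul_smul, hx, hy, hxy]
  module

namespace Matrix.PosSemidef

variable {n 𝕜 : Type*} [Fintype n] [RCLike 𝕜] {ρ : Matrix n n 𝕜}

theorem trace_mul_conjTranspose_mul_self_nonneg (hρ : ρ.PosSemidef) (X : Matrix n n 𝕜) :
    0 ≤ (ρ * (Xᴴ * X)).trace := by
  rw [← Matrix.mul_assoc, trace_mul_comm, ← Matrix.mul_assoc]
  exact (hρ.mul_mul_conjTranspose_same X).trace_nonneg

theorem re_trace_mul_sq_le_re_trace_mul_mul_self [DecidableEq n] (hρ : ρ.PosSemidef)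
    (htr : ρ.trace = 1) {M : Matrix n n 𝕜} (hM : M.IsHermitian) :
    RCLike.re (ρ * M).trace ^ 2 ≤ RCLike.re (ρ * (M * M)).trace := by
  set m := RCLike.re (ρ * M).trace
  set X := M - m • (1 : Matrix n n 𝕜)
  have hX : Xᴴ * X = M * M - (2 * m) • M + m ^ 2 • 1 := by
    simp only [X, conjTranspose_sub, conjTranspose_smul, hM.eq, conjTranspose_one, star_trivial,
      Matrix.sub_mul, Matrix.mul_sub, Matrix.smul_mul, Matrix.mul_smul, Matrix.one_mul,
      Matrix.mul_one]
    module
  have hvariance : RCLike.re (ρ * (Xᴴ * X)).trace = RCLike.re (ρ * (M * M)).trace - m ^ 2 := by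
    simp only [hX, Matrix.mul_add, Matrix.mul_sub, Matrix.mul_smul, Matrix.mul_one, trace_add,
      trace_sub, trace_smul, htr, map_add, map_sub, RCLike.smul_re, RCLike.one_re]
    ring
  have := (RCLike.nonneg_iff.mp (hρ.trace_mul_conjTranspose_mul_self_nonneg X)).1
  linarith

end Matrix.PosSemidef

/-- For two anticommuting Hermitian involutions `M₁`, `M₂` (`M₁M₂ = −M₂M₁`, `Mᵢ² = 1`)
and any quantum state `ρ`, one has `Tr(ρM₁)² + Tr(ρM₂)² ≤ 1`. -/
theorem two_anticommuting_expectation_bound (d : ℕ)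
    (M₁ M₂ : Matrix (Fin d) (Fin d) ℂ)
    (h₁ : M₁.IsHermitian) (h₂ : M₂.IsHermitian)
    (hinv₁ : M₁ * M₁ = 1) (hinv₂ : M₂ * M₂ = 1)
    (hanti : M₁ * M₂ = - (M₂ * M₁))
    (ρ : Matrix (Fin d) (Fin d) ℂ)
    (hρ : ρ.PosSemidef) (htr : ρ.trace = 1) :
    ((ρ * M₁).trace.re) ^ 2 + ((ρ * M₂).trace.re) ^ 2 ≤ 1 := by
  set a := (ρ * M₁).trace.re
  set b := (ρ * M₂).trace.re
  set M := a • M₁ + b • M₂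
  have hM : M.IsHermitian := (h₁.smul (.all a)).add (h₂.smul (.all b))
  have hexp : (ρ * M).trace.re = a ^ 2 + b ^ 2 := by
    simp only [M, Matrix.mul_add, Matrix.mul_smul, trace_add, trace_smul, Complex.add_re,
      Complex.smul_re, smul_eq_mul]
    ring
  have hsq : (ρ * (M * M)).trace.re = a ^ 2 + b ^ 2 := by
    rw [smul_add_smul_mul_self_of_anticommute hinv₁ hinv₂ hanti]
    simp only [Matrix.mul_smul, trace_smul, htr, Complex.smul_re, Complex.one_re,
      smul_eq_mul, mul_one]
  have := hρ.re_trace_mul_sq_le_re_trace_mul_mul_self htr hM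
  simp only [RCLike.re_to_complex, hexp, hsq] at this
  nlinarith [sq_nonneg a, sq_nonneg b]
end

section
/- Let M₁, M₂, M₃ be pairwise commuting Hermitian operators with eigenvalues ±1 (involutions). Then for any density matrix ρ, Tr(ρ M₁M₂) ≥ Tr(ρ M₁M₃) + Tr(ρ M₂M₃) − 1. -/
/-!
Put `A = M₁M₃` and `B = M₂M₃`: commuting Hermitian involutions with `AB = M₁M₂`.
The matrix `X = (1 - A)(1 - B)` is Hermitian with `X² = 4X`, so `X = (X/2)ᴴ(X/2)` is positive
semidefinite and `0 ≤ Tr(ρX) = 1 - Tr(ρA) - Tr(ρB) + Tr(ρ M₁M₂)`.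
-/

open Matrix
open scoped ComplexOrder

section Involution

variable {R : Type*} [Ring R] {a b : R}

lemma Commute.one_sub_one_sub (hab : Commute a b) : Commute (1 - a) (1 - b) :=
  (Commute.one_left _).sub_left ((Commute.one_right a).sub_right hab)

lemma Commute.mul_self_eq_one (hab : Commute a b) (ha : a * a = 1) (hb : b * b = 1) :
    a * b * (a * b) = 1 := by
  rw [hab.symm.mul_mul_mul_comm, ha, hb, one_mul]

lemma one_sub_mul_self_of_mul_self_eq_one (ha : a * a = 1) :
    (1 - a) * (1 - a) = 2 • (1 - a) := by
  noncomm_ring [ha]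

lemma Commute.one_sub_mul_one_sub_mul_self (hab : Commute a b) (ha : a * a = 1)
    (hb : b * b = 1) :
    (1 - a) * (1 - b) * ((1 - a) * (1 - b)) = 4 • ((1 - a) * (1 - b)) := by
  rw [hab.one_sub_one_sub.symm.mul_mul_mul_comm, one_sub_mul_self_of_mul_self_eq_one ha,
    one_sub_mul_self_of_mul_self_eq_one hb, smul_mul_smul_comm]

end Involution

namespace Matrix

variable {m n 𝕜 : Type*} [Fintype m] [Fintype n] [RCLike 𝕜]

lemma PosSemidef.trace_mul_conjTranspose_mul_self_nonneg_s2 {ρ : Matrix n n 𝕜}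
    (hρ : ρ.PosSemidef) (X : Matrix m n 𝕜) : 0 ≤ (ρ * (Xᴴ * X)).trace := by
  rw [← Matrix.mul_assoc, trace_mul_comm, ← Matrix.mul_assoc]
  exact (hρ.mul_mul_conjTranspose_same X).trace_nonneg

variable [DecidableEq n] {ρ A B : Matrix n n 𝕜}

lemma PosSemidef.trace_mul_one_sub_mul_one_sub_nonneg (hρ : ρ.PosSemidef)
    (hA : A.IsHermitian) (hB : B.IsHermitian) (hAB : Commute A B) (hA₂ : A * A = 1)
    (hB₂ : B * B = 1) : 0 ≤ (ρ * ((1 - A) * (1 - B))).trace := by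
  set X := (1 - A) * (1 - B)
  have hX : X.IsHermitian :=
    ((isHermitian_one.sub hA).commute_iff (isHermitian_one.sub hB)).mp hAB.one_sub_one_sub
  have hX_eq : X = ((2 : 𝕜)⁻¹ • X)ᴴ * ((2 : 𝕜)⁻¹ • X) := by
    rw [conjTranspose_smul, hX.eq, smul_mul_smul_comm,
      hAB.one_sub_mul_one_sub_mul_self hA₂ hB₂, ← ofNat_smul_eq_nsmul 𝕜, smul_smul,
      star_inv₀, star_ofNat]
    norm_num [X]
  rw [hX_eq]
  exact hρ.trace_mul_conjTranspose_mul_self_nonneg_s2 _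

theorem PosSemidef.re_trace_mul_add_re_trace_mul_le (hρ : ρ.PosSemidef) (htr : ρ.trace = 1)
    (hA : A.IsHermitian) (hB : B.IsHermitian) (hAB : Commute A B) (hA₂ : A * A = 1)
    (hB₂ : B * B = 1) :
    RCLike.re (ρ * A).trace + RCLike.re (ρ * B).trace - 1 ≤ RCLike.re (ρ * (A * B)).trace := by
  have key := (RCLike.nonneg_iff.mp
    (hρ.trace_mul_one_sub_mul_one_sub_nonneg hA hB hAB hA₂ hB₂)).1
  simp only [sub_mul, mul_sub, Matrix.one_mul, Matrix.mul_one, trace_sub, htr, map_sub,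
    RCLike.one_re] at key
  linarith

end Matrix

/-- For pairwise commuting Hermitian involutions `M₁, M₂, M₃` and any density matrix `ρ`,
`Tr(ρ M₁M₂) ≥ Tr(ρ M₁M₃) + Tr(ρ M₂M₃) − 1`. -/
theorem commuting_involutions_triangle_bound (d : ℕ)
    (M₁ M₂ M₃ : Matrix (Fin d) (Fin d) ℂ)
    (h₁ : M₁.IsHermitian) (h₂ : M₂.IsHermitian) (h₃ : M₃.IsHermitian)
    (hinv₁ : M₁ * M₁ = 1) (hinv₂ : M₂ * M₂ = 1) (hinv₃ : M₃ * M₃ = 1)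
    (hc₁₂ : M₁ * M₂ = M₂ * M₁) (hc₁₃ : M₁ * M₃ = M₃ * M₁) (hc₂₃ : M₂ * M₃ = M₃ * M₂)
    (ρ : Matrix (Fin d) (Fin d) ℂ)
    (hρ : ρ.PosSemidef) (htr : ρ.trace = 1) :
    ((ρ * (M₁ * M₂)).trace.re) ≥
      ((ρ * (M₁ * M₃)).trace.re) + ((ρ * (M₂ * M₃)).trace.re) - 1 := by
  have hc₁₃ : Commute M₁ M₃ := hc₁₃
  have hc₂₃ : Commute M₂ M₃ := hc₂₃
  have hAB : M₁ * M₃ * (M₂ * M₃) = M₁ * M₂ := by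
    rw [hc₂₃.symm.mul_mul_mul_comm, hinv₃, Matrix.mul_one]
  have hBA : M₂ * M₃ * (M₁ * M₃) = M₁ * M₂ := by
    rw [hc₁₃.symm.mul_mul_mul_comm, hinv₃, Matrix.mul_one, hc₁₂]
  simpa only [hAB, RCLike.re_to_complex, ge_iff_le] using
    hρ.re_trace_mul_add_re_trace_mul_le htr ((h₁.commute_iff h₃).mp hc₁₃)
      ((h₂.commute_iff h₃).mp hc₂₃) (hAB.trans hBA.symm)
      (hc₁₃.mul_self_eq_one hinv₁ hinv₃) (hc₂₃.mul_self_eq_one hinv₂ hinv₃)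
end

section
/- Let M₁, M₂, M₃ be pairwise commuting Hermitian involutions. Then for any density matrix ρ, |Tr(ρM₁M₃) + Tr(ρM₂M₃)| − 1 ≤ Tr(ρM₁M₂) ≤ 1 − |Tr(ρM₁M₃) − Tr(ρM₂M₃)|. -/
/-!
For commuting self-adjoint involutions `X, Y` the element `(1 + X)(1 + Y)` is four times a
projection: its square, and hence `star ((1 + X)(1 + Y)) * ((1 + X)(1 + Y))`, equals
`4 (1 + X)(1 + Y)`. So every positive functional `φ` satisfies
`0 ≤ φ 1 + φ X + φ Y + φ (XY)`, and the four sign choices `±X, ±Y` give both absolute-value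
bounds. The theorem is the case `φ A = Re Tr(ρA)`, `X = M₁M₃`, `Y = M₂M₃`, where `XY = M₁M₂`.
-/

open Matrix
open scoped ComplexOrder

theorem one_add_mul_self_of_mul_self_eq_one {R : Type*} [Ring R] {X : R} (hX : X * X = 1) :
    (1 + X) * (1 + X) = 2 • (1 + X) := by
  simp only [add_mul, mul_add, one_mul, mul_one, hX, two_nsmul]
  abel

section StarRing

variable {R : Type*} [Ring R] [StarRing R]

theorem star_mul_self_one_add_mul_one_add {X Y : R} (hX : IsSelfAdjoint X)
    (hY : IsSelfAdjoint Y) (hX2 : X * X = 1) (hY2 : Y * Y = 1) (hXY : Commute X Y) :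
    star ((1 + X) * (1 + Y)) * ((1 + X) * (1 + Y)) = 4 • ((1 + X) * (1 + Y)) := by
  have hcomm : Commute (1 + X) (1 + Y) :=
    (Commute.one_right _).add_right ((Commute.one_left Y).add_left hXY)
  have hself : IsSelfAdjoint ((1 + X) * (1 + Y)) :=
    ((IsSelfAdjoint.one R).add hX).commute_iff ((IsSelfAdjoint.one R).add hY) |>.mp hcomm
  calc star ((1 + X) * (1 + Y)) * ((1 + X) * (1 + Y))
      = (1 + X) * ((1 + Y) * (1 + X)) * (1 + Y) := by rw [hself.star_eq]; noncomm_ring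
    _ = ((1 + X) * (1 + X)) * ((1 + Y) * (1 + Y)) := by rw [← hcomm.eq]; noncomm_ring
    _ = 4 • ((1 + X) * (1 + Y)) := by
        rw [one_add_mul_self_of_mul_self_eq_one hX2, one_add_mul_self_of_mul_self_eq_one hY2,
          smul_mul_smul_comm]

variable (φ : R →+ ℝ) (hφ : ∀ x, 0 ≤ φ (star x * x))
include hφ

theorem apply_one_add_add_add_mul_nonneg {X Y : R} (hX : IsSelfAdjoint X)
    (hY : IsSelfAdjoint Y) (hX2 : X * X = 1) (hY2 : Y * Y = 1) (hXY : Commute X Y) :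
    0 ≤ φ 1 + φ X + φ Y + φ (X * Y) := by
  have h := hφ ((1 + X) * (1 + Y))
  rw [star_mul_self_one_add_mul_one_add hX hY hX2 hY2 hXY, map_nsmul,
    show (1 + X) * (1 + Y) = 1 + X + Y + X * Y by noncomm_ring] at h
  simp only [map_add, nsmul_eq_mul, Nat.cast_ofNat] at h
  linarith

theorem abs_add_sub_one_le_and_le_one_sub_abs_sub (hφ1 : φ 1 = 1) {X Y : R}
    (hX : IsSelfAdjoint X) (hY : IsSelfAdjoint Y) (hX2 : X * X = 1) (hY2 : Y * Y = 1)
    (hXY : Commute X Y) :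
    |φ X + φ Y| - 1 ≤ φ (X * Y) ∧ φ (X * Y) ≤ 1 - |φ X - φ Y| := by
  have hnX2 : -X * -X = 1 := by rw [neg_mul_neg, hX2]
  have hnY2 : -Y * -Y = 1 := by rw [neg_mul_neg, hY2]
  have hpp := apply_one_add_add_add_mul_nonneg φ hφ hX hY hX2 hY2 hXY
  have hmm := apply_one_add_add_add_mul_nonneg φ hφ hX.neg hY.neg hnX2 hnY2
    hXY.neg_left.neg_right
  have hpm := apply_one_add_add_add_mul_nonneg φ hφ hX hY.neg hX2 hnY2 hXY.neg_right
  have hmp := apply_one_add_add_add_mul_nonneg φ hφ hX.neg hY hnX2 hY2 hXY.neg_left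
  simp only [mul_neg, neg_mul, neg_neg, map_neg, hφ1] at hpp hmm hpm hmp
  constructor
  · rw [sub_le_iff_le_add, abs_le]
    constructor <;> linarith
  · rw [le_sub_comm, abs_le]
    constructor <;> linarith

theorem abs_add_sub_one_le_and_le_one_sub_abs_sub_of_three (hφ1 : φ 1 = 1) {a b c : R}
    (ha : IsSelfAdjoint a) (hb : IsSelfAdjoint b) (hc : IsSelfAdjoint c)
    (ha2 : a * a = 1) (hb2 : b * b = 1) (hc2 : c * c = 1)
    (hab : Commute a b) (hac : Commute a c) (hbc : Commute b c) :
    |φ (a * c) + φ (b * c)| - 1 ≤ φ (a * b) ∧ φ (a * b) ≤ 1 - |φ (a * c) - φ (b * c)| := by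
  have hprod : a * c * (b * c) = a * b := by rw [hbc.symm.mul_mul_mul_comm, hc2, mul_one]
  rw [← hprod]
  exact abs_add_sub_one_le_and_le_one_sub_abs_sub φ hφ hφ1
    ((ha.commute_iff hc).mp hac) ((hb.commute_iff hc).mp hbc)
    (by rw [hac.symm.mul_mul_mul_comm, ha2, hc2, one_mul])
    (by rw [hbc.symm.mul_mul_mul_comm, hb2, hc2, one_mul])
    ((hab.mul_right hac).mul_left (hbc.symm.mul_right (Commute.refl c)))

end StarRing

namespace Matrix

variable {n 𝕜 : Type*} [Fintype n] [RCLike 𝕜]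

noncomputable def expectation (ρ : Matrix n n 𝕜) : Matrix n n 𝕜 →+ ℝ :=
  RCLike.re.comp ((traceAddMonoidHom n 𝕜).comp (AddMonoidHom.mulLeft ρ))

theorem expectation_apply (ρ A : Matrix n n 𝕜) :
    expectation ρ A = RCLike.re (ρ * A).trace :=
  rfl

theorem PosSemidef.expectation_star_mul_self_nonneg {ρ : Matrix n n 𝕜} (hρ : ρ.PosSemidef)
    (C : Matrix n n 𝕜) : 0 ≤ expectation ρ (star C * C) := by
  rw [expectation_apply, star_eq_conjTranspose, ← mul_assoc, trace_mul_comm, ← mul_assoc]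
  exact (RCLike.nonneg_iff.mp ((hρ.mul_mul_conjTranspose_same C).trace_nonneg)).1

theorem expectation_one [DecidableEq n] {ρ : Matrix n n 𝕜} (hρ : ρ.trace = 1) :
    expectation ρ 1 = 1 := by
  rw [expectation_apply, mul_one, hρ, RCLike.one_re]

end Matrix

/-- For pairwise commuting Hermitian involutions `M₁, M₂, M₃` and any density matrix `ρ`,
`|Tr(ρM₁M₃) + Tr(ρM₂M₃)| − 1 ≤ Tr(ρM₁M₂) ≤ 1 − |Tr(ρM₁M₃) − Tr(ρM₂M₃)|`. -/
theorem commuting_involutions_abs_bounds (d : ℕ)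
    (M₁ M₂ M₃ : Matrix (Fin d) (Fin d) ℂ)
    (h₁ : M₁.IsHermitian) (h₂ : M₂.IsHermitian) (h₃ : M₃.IsHermitian)
    (hinv₁ : M₁ * M₁ = 1) (hinv₂ : M₂ * M₂ = 1) (hinv₃ : M₃ * M₃ = 1)
    (hc₁₂ : M₁ * M₂ = M₂ * M₁) (hc₁₃ : M₁ * M₃ = M₃ * M₁) (hc₂₃ : M₂ * M₃ = M₃ * M₂)
    (ρ : Matrix (Fin d) (Fin d) ℂ)
    (hρ : ρ.PosSemidef) (htr : ρ.trace = 1) :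
    |((ρ * (M₁ * M₃)).trace.re) + ((ρ * (M₂ * M₃)).trace.re)| - 1
      ≤ ((ρ * (M₁ * M₂)).trace.re) ∧
    ((ρ * (M₁ * M₂)).trace.re)
      ≤ 1 - |((ρ * (M₁ * M₃)).trace.re) - ((ρ * (M₂ * M₃)).trace.re)| :=
  abs_add_sub_one_le_and_le_one_sub_abs_sub_of_three (expectation ρ)
    hρ.expectation_star_mul_self_nonneg (expectation_one htr)
    h₁.isSelfAdjoint h₂.isSelfAdjoint h₃.isSelfAdjoint hinv₁ hinv₂ hinv₃ hc₁₂ hc₁₃ hc₂₃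
end

section
/- The GHZ state violates the network inequality: for ρ = |GHZ⟩⟨GHZ|, the quantity ⟨X_A X_B X_C⟩² + (⟨Z_A Z_B⟩ + ⟨Z_B Z_C⟩ − 1)² equals 2, which exceeds 1. -/
open Matrix
open scoped Kronecker

noncomputable def PauliX : Matrix (Fin 2) (Fin 2) ℂ := !![0, 1; 1, 0]
noncomputable def PauliZ : Matrix (Fin 2) (Fin 2) ℂ := !![1, 0; 0, -1]

/-- The three-qubit GHZ state `(|000⟩ + |111⟩)/√2`. -/
noncomputable def ghz : Fin 2 × Fin 2 × Fin 2 → ℂ :=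
  fun x => if x.1 = x.2.1 ∧ x.2.1 = x.2.2 then ((1 / Real.sqrt 2 : ℝ) : ℂ) else 0

/-- Expectation value `⟨GHZ|O|GHZ⟩` (real part). -/
noncomputable def ghzExp (O : Matrix (Fin 2 × Fin 2 × Fin 2) (Fin 2 × Fin 2 × Fin 2) ℂ) : ℝ :=
  (star ghz ⬝ᵥ (O *ᵥ ghz)).re

/-- For `ρ = |GHZ⟩⟨GHZ|`, the quantity
`⟨X_A X_B X_C⟩² + (⟨Z_A Z_B⟩ + ⟨Z_B Z_C⟩ − 1)²` equals `2`, which exceeds `1`. -/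
theorem ghz_violates_network_inequality :
    ghzExp (PauliX ⊗ₖ (PauliX ⊗ₖ PauliX)) ^ 2 +
      (ghzExp (PauliZ ⊗ₖ (PauliZ ⊗ₖ (1 : Matrix (Fin 2) (Fin 2) ℂ))) +
        ghzExp ((1 : Matrix (Fin 2) (Fin 2) ℂ) ⊗ₖ (PauliZ ⊗ₖ PauliZ)) - 1) ^ 2 = 2 ∧
    (2 : ℝ) > 1 := by
  have hx : ghzExp (PauliX ⊗ₖ (PauliX ⊗ₖ PauliX)) = 1 := by
    simp only [ghzExp, dotProduct, mulVec, Fintype.sum_prod_type, Fin.sum_univ_two,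
      kroneckerMap_apply, ghz, PauliX, Matrix.one_apply, Pi.star_apply]
    norm_num [Complex.ext_iff]
    nlinarith [Real.sq_sqrt (show (0:ℝ) ≤ 2 by norm_num), Real.sqrt_nonneg 2]
  have hz1 : ghzExp (PauliZ ⊗ₖ (PauliZ ⊗ₖ (1 : Matrix (Fin 2) (Fin 2) ℂ))) = 1 := by
    simp only [ghzExp, dotProduct, mulVec, Fintype.sum_prod_type, Fin.sum_univ_two,
      kroneckerMap_apply, ghz, PauliZ, Matrix.one_apply, Pi.star_apply]
    norm_num [Complex.ext_iff]
    nlinarith [Real.sq_sqrt (show (0:ℝ) ≤ 2 by norm_num), Real.sqrt_nonneg 2]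
  have hz2 : ghzExp ((1 : Matrix (Fin 2) (Fin 2) ℂ) ⊗ₖ (PauliZ ⊗ₖ PauliZ)) = 1 := by
    simp only [ghzExp, dotProduct, mulVec, Fintype.sum_prod_type, Fin.sum_univ_two,
      kroneckerMap_apply, ghz, PauliZ, Matrix.one_apply, Pi.star_apply]
    norm_num [Complex.ext_iff]
    nlinarith [Real.sq_sqrt (show (0:ℝ) ≤ 2 by norm_num), Real.sqrt_nonneg 2]
  rw [hx, hz1, hz2]
  norm_num
end

section
/- Let ρ be a density matrix on a bipartite system H_AB ⊗ H_C. If the reduced state ρ_AB = Tr_C(ρ) satisfies F·ρ_AB = ρ_AB, where F is the flip (swap) operator on H_A ⊗ H_B with H_A ≅ H_B, then (F ⊗ 1_C)·ρ = ρ. The analogous statement holds with F·ρ_AB = −ρ_AB. -/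
open Matrix
open scoped Kronecker ComplexOrder

/-- Partial trace over the third system `C` of a state on `(ℂ^d ⊗ ℂ^d) ⊗ ℂ^m`. -/
noncomputable def ptraceC (d m : ℕ)
    (ρ : Matrix ((Fin d × Fin d) × Fin m) ((Fin d × Fin d) × Fin m) ℂ) :
    Matrix (Fin d × Fin d) (Fin d × Fin d) ℂ :=
  fun x y => ∑ c, ρ (x, c) (y, c)

/-- The flip (swap) operator on `ℂ^d ⊗ ℂ^d`, `F(|i⟩⊗|j⟩) = |j⟩⊗|i⟩`. -/
noncomputable def flipOp (d : ℕ) : Matrix (Fin d × Fin d) (Fin d × Fin d) ℂ :=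
  fun x y => if x.1 = y.2 ∧ x.2 = y.1 then 1 else 0

/-! Put `M = F - ε` and `N = M ⊗ 1_C`. Writing `ρ = B†B`, the trace of `(B N†)†(B N†) = N ρ N†`
equals `Tr((M†M ⊗ 1_C) ρ) = Tr(M†M ρ_AB)`, which vanishes because `M ρ_AB = 0`. Hence `B N† = 0`,
so `N ρ = (B N†)† B = 0`, i.e. `(F ⊗ 1_C) ρ = ε ρ`. -/

namespace Matrix

def partialTraceRight {ι κ R : Type*} [Fintype κ] [AddCommMonoid R]
    (ρ : Matrix (ι × κ) (ι × κ) R) : Matrix ι ι R :=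
  fun x y => ∑ c, ρ (x, c) (y, c)

theorem sub_kronecker {l m n p R : Type*} [NonUnitalNonAssocRing R] (A B : Matrix l m R)
    (C : Matrix n p R) : (A - B) ⊗ₖ C = A ⊗ₖ C - B ⊗ₖ C := by
  ext
  simp [sub_mul]

variable {ι κ : Type*} [Fintype ι] [Fintype κ] [DecidableEq κ]

theorem trace_kronecker_one_mul {R : Type*} [Semiring R] (S : Matrix ι ι R)
    (ρ : Matrix (ι × κ) (ι × κ) R) :
    ((S ⊗ₖ (1 : Matrix κ κ R)) * ρ).trace = (S * partialTraceRight ρ).trace := by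
  simp only [trace, diag, mul_apply, Fintype.sum_prod_type, kroneckerMap_apply, one_apply,
    mul_ite, mul_one, mul_zero, partialTraceRight, Finset.mul_sum]
  refine Finset.sum_congr rfl fun x _ => ?_
  rw [Finset.sum_comm]
  simp

open scoped MatrixOrder in
theorem PosSemidef.kronecker_one_mul_eq_zero [DecidableEq ι] {𝕜 : Type*} [RCLike 𝕜]
    {ρ : Matrix (ι × κ) (ι × κ) 𝕜} (hρ : ρ.PosSemidef) {A : Matrix ι ι 𝕜}
    (hA : A * partialTraceRight ρ = 0) : (A ⊗ₖ (1 : Matrix κ κ 𝕜)) * ρ = 0 := by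
  obtain ⟨B, rfl⟩ := CStarAlgebra.nonneg_iff_eq_star_mul_self.mp hρ.nonneg
  set N := A ⊗ₖ (1 : Matrix κ κ 𝕜)
  rw [star_eq_conjTranspose] at hA ⊢
  have hNN : Nᴴ * N = (Aᴴ * A) ⊗ₖ (1 : Matrix κ κ 𝕜) := by
    rw [conjTranspose_kronecker, conjTranspose_one, ← mul_kronecker_mul, one_mul]
  have hBN : B * Nᴴ = 0 := by
    rw [← trace_conjTranspose_mul_self_eq_zero_iff, conjTranspose_mul, conjTranspose_conjTranspose,
      ← mul_assoc, trace_mul_comm, mul_assoc N, ← mul_assoc, hNN, trace_kronecker_one_mul,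
      mul_assoc, hA, mul_zero, trace_zero]
  rw [← mul_assoc, ← conjTranspose_conjTranspose (N * Bᴴ), conjTranspose_mul,
    conjTranspose_conjTranspose, hBN, conjTranspose_zero, zero_mul]

end Matrix

theorem ptraceC_eq_partialTraceRight (d m : ℕ) : ptraceC d m = partialTraceRight := rfl

theorem flip_symmetry_extends_from_marginal_general (d m : ℕ)
    (ρ : Matrix ((Fin d × Fin d) × Fin m) ((Fin d × Fin d) × Fin m) ℂ)
    (hρ : ρ.PosSemidef)
    (ε : ℂ)
    (hmarg : flipOp d * ptraceC d m ρ = ε • ptraceC d m ρ) :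
    (flipOp d ⊗ₖ (1 : Matrix (Fin m) (Fin m) ℂ)) * ρ = ε • ρ := by
  have hker : (flipOp d - ε • 1) * partialTraceRight ρ = 0 := by
    rw [sub_mul, smul_mul_assoc, one_mul, sub_eq_zero, ← ptraceC_eq_partialTraceRight, hmarg]
  have h := hρ.kronecker_one_mul_eq_zero hker
  rwa [sub_kronecker, smul_kronecker, one_kronecker_one, sub_mul, smul_mul_assoc, one_mul,
    sub_eq_zero] at h

/-- If the reduced state `ρ_AB = Tr_C(ρ)` of a density matrix `ρ` on `H_AB ⊗ H_C`
satisfies `F ρ_AB = ± ρ_AB`, then `(F ⊗ 1_C) ρ = ± ρ` (same sign). -/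
theorem flip_symmetry_extends_from_marginal (d m : ℕ)
    (ρ : Matrix ((Fin d × Fin d) × Fin m) ((Fin d × Fin d) × Fin m) ℂ)
    (hρ : ρ.PosSemidef) (htr : ρ.trace = 1)
    (ε : ℂ) (hε : ε = 1 ∨ ε = -1)
    (hmarg : flipOp d * ptraceC d m ρ = ε • ptraceC d m ρ) :
    (flipOp d ⊗ₖ (1 : Matrix (Fin m) (Fin m) ℂ)) * ρ = ε • ρ :=
  flip_symmetry_extends_from_marginal_general d m ρ hρ ε hmarg
end

section
/- A pure N-partite permutationally symmetric state that is a product across some bipartition must be fully separable: if |Ψ⟩ ∈ (ℂ^d)^⊗N is invariant under every transposition of tensor factors and |Ψ⟩ = |φ⟩ ⊗ |χ⟩ for some bipartition of the N factors into two nonempty groups, then |Ψ⟩ = |a⟩^⊗N for some unit vector |a⟩ ∈ ℂ^d. -/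
open Matrix


private lemma sum_prod_comp' {N d : ℕ} (h : Fin d → ℂ) :
    ∑ f : Fin N → Fin d, ∏ i, h (f i) = (∑ x, h x) ^ N := by
  have := Fintype.prod_sum (ι := Fin N) (κ := fun _ => Fin d) (fun _ x => h x)
  rw [Finset.prod_const, Finset.card_univ, Fintype.card_fin] at this
  exact this.symm

private lemma pow_eq_one_nonneg' {x : ℝ} {n : ℕ} (hx : 0 ≤ x) (h : x ^ n = 1)
    (hn : n ≠ 0) : x = 1 := by
  rcases lt_trichotomy x 1 with h1 | h1 | h1
  · have := pow_lt_one₀ hx h1 hn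
    rw [h] at this; exact absurd this (lt_irrefl 1)
  · exact h1
  · have := one_lt_pow₀ h1 hn
    rw [h] at this; exact absurd this (lt_irrefl 1)


/-- A pure `N`-partite permutationally symmetric state (coefficient function on
`(ℂ^d)^⊗N`, indexed by `Fin N → Fin d`) that is a product across some nontrivial
bipartition `S | Sᶜ` must be fully separable: `|Ψ⟩ = |a⟩^⊗N`. -/
theorem symmetric_product_state_fully_separable (N d : ℕ)
    (v : (Fin N → Fin d) → ℂ)
    (hv : star v ⬝ᵥ v = 1)
    (hsym : ∀ σ : Equiv.Perm (Fin N), ∀ f, v (f ∘ σ) = v f)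
    (S : Finset (Fin N)) (hS : S.Nonempty) (hSc : Sᶜ.Nonempty)
    (φ : ({i // i ∈ S} → Fin d) → ℂ) (χ : ({i // i ∉ S} → Fin d) → ℂ)
    (hprod : ∀ f, v f = φ (fun i => f i.1) * χ (fun i => f i.1)) :
    ∃ a : Fin d → ℂ, star a ⬝ᵥ a = 1 ∧ ∀ f, v f = ∏ i, a (f i) := by
  classical
  obtain ⟨s, hs⟩ := hS
  obtain ⟨t, ht'⟩ := hSc
  have ht : t ∉ S := by simpa using ht'
  have hst : s ≠ t := fun h => ht (h ▸ hs)
  set A : (Fin N → Fin d) → ℂ := fun f => φ (fun i => f i.1) with hA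
  set B : (Fin N → Fin d) → ℂ := fun f => χ (fun i => f i.1) with hB
  have hvAB : ∀ f, v f = A f * B f := hprod
  have hAext : ∀ f g : Fin N → Fin d, (∀ i ∈ S, f i = g i) → A f = A g := by
    intro f g h
    simp only [hA]
    congr 1
    funext i
    exact h i.1 i.2
  have hBext : ∀ f g : Fin N → Fin d, (∀ i ∉ S, f i = g i) → B f = B g := by
    intro f g h
    simp only [hB]
    congr 1
    funext i
    exact h i.1 i.2
  -- nonzero point
  have hex : ∃ f₀, v f₀ ≠ 0 := by
    by_contra h
    push_neg at h
    rw [show (star v ⬝ᵥ v) = 0 by simp [dotProduct, h]] at hv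
    exact one_ne_zero hv.symm
  obtain ⟨f₀, hf₀⟩ := hex
  -- the key 4-variable identity from symmetry + product structure
  have hK : ∀ (f g : Fin N → Fin d) (x y : Fin d),
      A (Function.update f s x) * B (Function.update g t y)
        = A (Function.update f s y) * B (Function.update g t x) := by
    intro f g x y
    set h0 : Fin N → Fin d := fun i => if i ∈ S then f i else g i with hh0
    have hcomp : (Function.update (Function.update h0 s x) t y) ∘ (Equiv.swap s t)
        = Function.update (Function.update h0 s y) t x := by
      funext i
      rcases eq_or_ne i s with rfl | his
      · simp [Function.comp, Equiv.swap_apply_left, Function.update, hst, hst.symm]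
      · rcases eq_or_ne i t with rfl | hit
        · simp [Function.comp, Equiv.swap_apply_right, Function.update, hst, hst.symm]
        · simp [Function.comp, Equiv.swap_apply_of_ne_of_ne his hit, Function.update, his, hit]
    have h1 := hsym (Equiv.swap s t) (Function.update (Function.update h0 s x) t y)
    rw [hcomp] at h1
    -- h1 : v (update (update h0 s y) t x) = v (update (update h0 s x) t y)
    have eA1 : A (Function.update (Function.update h0 s x) t y) = A (Function.update f s x) := by
      apply hAext
      intro i hi
      have hit : i ≠ t := fun h => ht (h ▸ hi)
      rw [Function.update_of_ne hit]
      rcases eq_or_ne i s with rfl | his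
      · simp [Function.update]
      · simp [Function.update, his, hh0, hi]
    have eA2 : A (Function.update (Function.update h0 s y) t x) = A (Function.update f s y) := by
      apply hAext
      intro i hi
      have hit : i ≠ t := fun h => ht (h ▸ hi)
      rw [Function.update_of_ne hit]
      rcases eq_or_ne i s with rfl | his
      · simp [Function.update]
      · simp [Function.update, his, hh0, hi]
    have eB1 : B (Function.update (Function.update h0 s x) t y) = B (Function.update g t y) := by
      apply hBext
      intro i hi
      have his : i ≠ s := fun h => hi (h ▸ hs)
      rcases eq_or_ne i t with rfl | hit
      · simp [Function.update]
      · rw [Function.update_of_ne hit, Function.update_of_ne hit, Function.update_of_ne his]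
        simp [hh0, hi]
    have eB2 : B (Function.update (Function.update h0 s y) t x) = B (Function.update g t x) := by
      apply hBext
      intro i hi
      have his : i ≠ s := fun h => hi (h ▸ hs)
      rcases eq_or_ne i t with rfl | hit
      · simp [Function.update]
      · rw [Function.update_of_ne hit, Function.update_of_ne hit, Function.update_of_ne his]
        simp [hh0, hi]
    have := h1
    rw [hvAB, hvAB, eA1, eA2, eB1, eB2] at this
    exact this.symm
  have hE : ∀ (j : Fin N) (f g : Fin N → Fin d), v f * v g
      = v (Function.update f j (g j)) * v (Function.update g j (f j)) := by
    have hA0 : A f₀ ≠ 0 := by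
      intro h
      exact hf₀ (by rw [hvAB, h, zero_mul])
    -- factorization of B at coordinate t
    have FB : ∀ (g : Fin N → Fin d) (x : Fin d),
        B (Function.update g t x) * A f₀
          = A (Function.update f₀ s x) * B (Function.update g t (f₀ s)) := by
      intro g x
      have := hK f₀ g (f₀ s) x
      rw [Function.update_eq_self] at this
      rw [mul_comm] at this
      exact this
    -- singleton exchange at t
    have hEt : ∀ f g, v f * v g
        = v (Function.update f t (g t)) * v (Function.update g t (f t)) := by
      intro f g
      have hAf : A (Function.update f t (g t)) = A f := by
        apply hAext
        intro i hi
        exact Function.update_of_ne (fun h : i = t => ht (h ▸ hi)) _ _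
      have hAg : A (Function.update g t (f t)) = A g := by
        apply hAext
        intro i hi
        exact Function.update_of_ne (fun h : i = t => ht (h ▸ hi)) _ _
      have e1 : B f * A f₀ = A (Function.update f₀ s (f t)) * B (Function.update f t (f₀ s)) := by
        have := FB f (f t); rwa [Function.update_eq_self] at this
      have e2 : B g * A f₀ = A (Function.update f₀ s (g t)) * B (Function.update g t (f₀ s)) := by
        have := FB g (g t); rwa [Function.update_eq_self] at this
      have e3 := FB f (g t)
      have e4 := FB g (f t)
      have key : v f * v g * (A f₀ * A f₀)
          = v (Function.update f t (g t)) * v (Function.update g t (f t)) * (A f₀ * A f₀) := by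
        rw [hvAB f, hvAB g, hvAB (Function.update f t (g t)), hvAB (Function.update g t (f t)),
          hAf, hAg]
        calc A f * B f * (A g * B g) * (A f₀ * A f₀)
            = A f * A g * ((B f * A f₀) * (B g * A f₀)) := by ring
          _ = A f * A g * ((A (Function.update f₀ s (f t)) * B (Function.update f t (f₀ s)))
                * (A (Function.update f₀ s (g t)) * B (Function.update g t (f₀ s)))) := by
              rw [e1, e2]
          _ = A f * A g * ((A (Function.update f₀ s (g t)) * B (Function.update f t (f₀ s)))
                * (A (Function.update f₀ s (f t)) * B (Function.update g t (f₀ s)))) := by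
              ring
          _ = A f * A g * ((B (Function.update f t (g t)) * A f₀)
                * (B (Function.update g t (f t)) * A f₀)) := by rw [e3, e4]
          _ = A f * B (Function.update f t (g t)) * (A g * B (Function.update g t (f t)))
                * (A f₀ * A f₀) := by ring
      exact mul_right_cancel₀ (mul_ne_zero hA0 hA0) key
    -- transport to any coordinate
    intro j f g
    set σ := Equiv.swap t j with hσ
    have hσt : σ t = j := Equiv.swap_apply_left t j
    have hcomp : ∀ (f : Fin N → Fin d) (x : Fin d),
        (Function.update f j x) ∘ σ = Function.update (f ∘ σ) t x := by
      intro f x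
      funext i
      rcases eq_or_ne i t with rfl | hit
      · show Function.update f j x (σ i) = _
        rw [hσt, Function.update_self, Function.update_self]
      · have hne : σ i ≠ j := by
          intro h
          exact hit (σ.injective (h.trans hσt.symm))
        simp only [Function.comp]
        rw [Function.update_of_ne hne, Function.update_of_ne hit]
        rfl
    have e2 : (g ∘ σ) t = g j := by simp [Function.comp, hσt]
    have e3 : (f ∘ σ) t = f j := by simp [Function.comp, hσt]
    calc v f * v g = v (f ∘ σ) * v (g ∘ σ) := by rw [hsym, hsym]
      _ = v (Function.update (f ∘ σ) t (g j)) * v (Function.update (g ∘ σ) t (f j)) := by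
          rw [← e2, ← e3]; exact hEt _ _
      _ = v ((Function.update f j (g j)) ∘ σ) * v ((Function.update g j (f j)) ∘ σ) := by
          rw [hcomp, hcomp]
      _ = _ := by rw [hsym, hsym]
  have hN : 0 < N := s.pos
  -- iteration: peel off coordinates one by one
  have hIter : ∀ T : Finset (Fin N), ∀ f, v f * (v f₀) ^ T.card
      = v (fun i => if i ∈ T then f₀ i else f i) * ∏ j ∈ T, v (Function.update f₀ j (f j)) := by
    intro T
    induction T using Finset.induction_on with
    | empty => intro f; simp
    | @insert j T hj ih =>
      intro f
      rw [Finset.card_insert_of_notMem hj, pow_succ, ← mul_assoc, ih f]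
      have key := hE j (fun i => if i ∈ T then f₀ i else f i) f₀
      have hupd : Function.update (fun i => if i ∈ T then f₀ i else f i) j (f₀ j)
          = fun i => if i ∈ insert j T then f₀ i else f i := by
        funext i
        rcases eq_or_ne i j with rfl | hij
        · simp [Function.update]
        · rw [Function.update_of_ne hij]
          simp [Finset.mem_insert, hij]
      rw [hupd, if_neg hj] at key
      -- key : v mixT * v f₀ = v mix(insert j T) * v (update f₀ j (f j))
      rw [Finset.prod_insert hj]
      calc v (fun i => if i ∈ T then f₀ i else f i) * (∏ j' ∈ T, v (Function.update f₀ j' (f j'))) * v f₀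
          = (v (fun i => if i ∈ T then f₀ i else f i) * v f₀) * ∏ j' ∈ T, v (Function.update f₀ j' (f j')) := by ring
        _ = (v (fun i => if i ∈ insert j T then f₀ i else f i) * v (Function.update f₀ j (f j)))
              * ∏ j' ∈ T, v (Function.update f₀ j' (f j')) := by rw [key]
        _ = _ := by ring
  have hF : ∀ f, v f * (v f₀) ^ N = v f₀ * ∏ j, v (Function.update f₀ j (f j)) := by
    intro f
    have := hIter Finset.univ f
    simpa using this
  -- pairwise exchange relation among the single-site functions
  have hpair : ∀ (j j' : Fin N), j ≠ j' → ∀ x y : Fin d,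
      v (Function.update f₀ j x) * v (Function.update f₀ j' y)
        = v (Function.update f₀ j y) * v (Function.update f₀ j' x) := by
    intro j j' hjj x y
    have col : ∀ z w : Fin d, Function.update (Function.update f₀ j' z) j'
        ((Function.update f₀ j w) j') = f₀ := by
      intro z w
      rw [show (Function.update f₀ j w) j' = f₀ j' from Function.update_of_ne hjj.symm _ _,
        Function.update_idem, Function.update_eq_self]
    have h1 := hE j' (Function.update f₀ j x) (Function.update f₀ j' y)
    rw [Function.update_self, col] at h1
    have h2 := hE j' (Function.update f₀ j y) (Function.update f₀ j' x)
    rw [Function.update_self, col] at h2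
    -- h1 : v (upd f₀ j x) * v (upd f₀ j' y) = v (upd (upd f₀ j x) j' y) * v f₀
    have hswap : (Function.update (Function.update f₀ j x) j' y) ∘ (Equiv.swap j j')
        = Function.update (Function.update f₀ j y) j' x := by
      funext i
      rcases eq_or_ne i j with rfl | hij
      · show Function.update (Function.update f₀ i x) j' y (Equiv.swap i j' i) = _
        rw [Equiv.swap_apply_left, Function.update_self, Function.update_of_ne hjj,
          Function.update_self]
      · rcases eq_or_ne i j' with rfl | hij'
        · show Function.update (Function.update f₀ j x) i y (Equiv.swap j i i) = _
          rw [Equiv.swap_apply_right, Function.update_of_ne hjj, Function.update_self,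
            Function.update_self]
        · show Function.update (Function.update f₀ j x) j' y (Equiv.swap j j' i) = _
          rw [Equiv.swap_apply_of_ne_of_ne hij hij', Function.update_of_ne hij',
            Function.update_of_ne hij, Function.update_of_ne hij', Function.update_of_ne hij]
    have h3 : v (Function.update (Function.update f₀ j x) j' y)
        = v (Function.update (Function.update f₀ j y) j' x) := by
      rw [← hswap]; exact (hsym _ _).symm ▸ hsym (Equiv.swap j j') _
    rw [h1, h2, h3]
  -- relate every site function to the s-site function
  have hrel : ∀ (i : Fin N) (x : Fin d),
      v (Function.update f₀ s x) * v f₀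
        = v (Function.update f₀ s (f₀ i)) * v (Function.update f₀ i x) := by
    intro i x
    rcases eq_or_ne i s with rfl | his
    · rw [Function.update_eq_self]; ring
    · have := hpair s i (fun h => his h.symm) x (f₀ i)
      rwa [Function.update_eq_self] at this
  have hne : ∀ i, v (Function.update f₀ s (f₀ i)) ≠ 0 := by
    intro i h
    have h2 := hrel i (f₀ s)
    rw [Function.update_eq_self, h, zero_mul] at h2
    exact hf₀ (mul_self_eq_zero.mp h2)
  have hK0 : (∏ i : Fin N, v (Function.update f₀ s (f₀ i))) ≠ 0 :=
    Finset.prod_ne_zero_iff.mpr (fun i _ => hne i)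
  -- full product formula
  have hFinal : ∀ f, v f * (∏ i : Fin N, v (Function.update f₀ s (f₀ i)))
      = v f₀ * ∏ i : Fin N, v (Function.update f₀ s (f i)) := by
    intro f
    have h1 : v f * (∏ i : Fin N, v (Function.update f₀ s (f₀ i))) * (v f₀) ^ N
        = (v f₀ * ∏ i : Fin N, v (Function.update f₀ s (f i))) * (v f₀) ^ N := by
      calc v f * (∏ i : Fin N, v (Function.update f₀ s (f₀ i))) * (v f₀) ^ N
          = (v f * (v f₀) ^ N) * ∏ i : Fin N, v (Function.update f₀ s (f₀ i)) := by ring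
        _ = (v f₀ * ∏ i : Fin N, v (Function.update f₀ i (f i)))
              * ∏ i : Fin N, v (Function.update f₀ s (f₀ i)) := by rw [hF f]
        _ = v f₀ * ∏ i : Fin N, (v (Function.update f₀ s (f₀ i)) * v (Function.update f₀ i (f i))) := by
            rw [Finset.prod_mul_distrib]; ring
        _ = v f₀ * ∏ i : Fin N, (v (Function.update f₀ s (f i)) * v f₀) := by
            rw [Finset.prod_congr rfl (fun i _ => (hrel i (f i)).symm)]
        _ = (v f₀ * ∏ i : Fin N, v (Function.update f₀ s (f i))) * (v f₀) ^ N := by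
            rw [Finset.prod_mul_distrib, Finset.prod_const, Finset.card_univ, Fintype.card_fin]
            ring
    exact mul_right_cancel₀ (pow_ne_zero N hf₀) h1
  set C : ℂ := v f₀ / ∏ i : Fin N, v (Function.update f₀ s (f₀ i)) with hC
  have hvf : ∀ f, v f = C * ∏ i : Fin N, v (Function.update f₀ s (f i)) := by
    intro f
    rw [hC, div_mul_eq_mul_div, eq_div_iff hK0]
    exact hFinal f
  -- normalization
  have hsum : (1 : ℂ) = ((starRingEnd ℂ) C * C)
      * (∑ x, (starRingEnd ℂ) (v (Function.update f₀ s x)) * v (Function.update f₀ s x)) ^ N := by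
    rw [← hv]
    have hdp : star v ⬝ᵥ v = ∑ f, (starRingEnd ℂ) (v f) * v f := by
      simp [dotProduct, Complex.star_def]
    rw [hdp, ← sum_prod_comp' (fun x => (starRingEnd ℂ) (v (Function.update f₀ s x)) * v (Function.update f₀ s x)),
      Finset.mul_sum]
    refine Finset.sum_congr rfl (fun f _ => ?_)
    rw [hvf f, Finset.prod_mul_distrib, _root_.map_mul, map_prod]
    ring
  set Tr : ℝ := ∑ x, Complex.normSq (v (Function.update f₀ s x)) with hTr
  have e2 : ((Tr : ℝ) : ℂ) = ∑ x, (starRingEnd ℂ) (v (Function.update f₀ s x)) * v (Function.update f₀ s x) := by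
    rw [hTr]
    push_cast
    exact Finset.sum_congr rfl fun x _ => Complex.normSq_eq_conj_mul_self
  have hsum2 : Complex.normSq C * Tr ^ N = 1 := by
    have h3 : ((Complex.normSq C * Tr ^ N : ℝ) : ℂ) = ((1 : ℝ) : ℂ) := by
      rw [Complex.ofReal_mul, Complex.ofReal_pow, Complex.normSq_eq_conj_mul_self, e2,
        Complex.ofReal_one, ← hsum]
    exact_mod_cast h3
  have hTrnn : 0 ≤ Tr := Finset.sum_nonneg fun x _ => Complex.normSq_nonneg _
  obtain ⟨γ, hγ⟩ := IsAlgClosed.exists_pow_nat_eq (k := ℂ) C hN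
  refine ⟨fun x => γ * v (Function.update f₀ s x), ?_, ?_⟩
  · have hdp2 : (star (fun x => γ * v (Function.update f₀ s x))
        ⬝ᵥ fun x => γ * v (Function.update f₀ s x))
        = ∑ x, (starRingEnd ℂ) (γ * v (Function.update f₀ s x))
            * (γ * v (Function.update f₀ s x)) := by
      simp [dotProduct, Complex.star_def]
    rw [hdp2]
    have e4 : ∑ x, (starRingEnd ℂ) (γ * v (Function.update f₀ s x))
        * (γ * v (Function.update f₀ s x))
        = ((starRingEnd ℂ) γ * γ)
          * ∑ x, (starRingEnd ℂ) (v (Function.update f₀ s x)) * v (Function.update f₀ s x) := by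
      rw [Finset.mul_sum]
      exact Finset.sum_congr rfl fun x _ => by rw [_root_.map_mul]; ring
    rw [e4, ← e2, ← Complex.normSq_eq_conj_mul_self]
    have e5 : Complex.normSq γ * Tr = 1 := by
      apply pow_eq_one_nonneg' (mul_nonneg (Complex.normSq_nonneg _) hTrnn) _ hN.ne'
      rw [mul_pow, ← map_pow Complex.normSq, hγ]
      exact hsum2
    rw [← Complex.ofReal_mul, e5, Complex.ofReal_one]
  · intro f
    rw [hvf f, Finset.prod_mul_distrib, Finset.prod_const, Finset.card_univ,
      Fintype.card_fin, hγ]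
end

section
/- Every permutationally symmetric state that is separable across one bipartition is fully separable: if a density matrix ρ on (ℂ^d)^⊗N satisfies P_σ ρ P_σ† = ρ for all permutations σ, ρ is supported on the symmetric subspace (Π⁺ρΠ⁺ = ρ with Π⁺ the projector onto the symmetric subspace), and ρ is separable with respect to some bipartition of the N parties, then ρ is fully separable, i.e., a convex combination of states |a⟩⟨a|^⊗N. -/
/-!
Factor `σ_k = B_kᴴ B_k` and `τ_k = C_kᴴ C_k`; then `ρ = U Uᴴ`, where each column of `U` is `√w_k`
times the tensor product of a column of `B_kᴴ` and one of `C_kᴴ`, hence a product across `S | Sᶜ`.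
From `Π⁺ ρ Π⁺ = ρ` the columns lie in the symmetric subspace. Permuting the cut, a symmetric
vector `u` that is a product across one cut is a product across every two-site cut `{i, j}`.
Exchanging one site at a time with a base point `f₀` where `u` does not vanish then gives
`u f = u f₀ * ∏ k, u (f₀[k ↦ f k]) / u f₀`, and for a constant base point all these factors
coincide by symmetry, so `u` is a multiple of `a^⊗N`. Normalising `a` yields the weights, which
sum to `tr ρ = 1`.
-/

open Matrix
open scoped ComplexOrder

/-- Permutation operator `P_σ` on `(ℂ^d)^⊗N`, acting on coefficient functions by
`(P_σ v) f = v (f ∘ σ)`. -/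
noncomputable def permOp (N d : ℕ) (σ : Equiv.Perm (Fin N)) :
    Matrix (Fin N → Fin d) (Fin N → Fin d) ℂ :=
  fun f g => if g = f ∘ σ then 1 else 0

/-- Projector onto the symmetric subspace of `(ℂ^d)^⊗N`. -/
noncomputable def symProj (N d : ℕ) : Matrix (Fin N → Fin d) (Fin N → Fin d) ℂ :=
  (1 / (Nat.factorial N) : ℂ) • ∑ σ : Equiv.Perm (Fin N), permOp N d σ

open scoped symmDiff MatrixOrder
open Function Finset

section PermOp

variable {N d : ℕ}

theorem permOp_mul_apply (σ : Equiv.Perm (Fin N)) {J : Type*} (U : Matrix (Fin N → Fin d) J ℂ)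
    (f : Fin N → Fin d) (j : J) : (permOp N d σ * U) f j = U (f ∘ σ) j := by
  simp [Matrix.mul_apply, permOp]

theorem permOp_mul (σ τ : Equiv.Perm (Fin N)) :
    permOp N d σ * permOp N d τ = permOp N d (σ * τ) := by
  ext f g
  rw [permOp_mul_apply]
  rfl

theorem permOp_mul_symProj (σ : Equiv.Perm (Fin N)) :
    permOp N d σ * symProj N d = symProj N d := by
  rw [symProj, Matrix.mul_smul, Finset.mul_sum]
  simp_rw [permOp_mul]
  congr 1
  exact Fintype.sum_equiv (Equiv.mulLeft σ) _ _ fun _ => rfl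

theorem isIdempotentElem_symProj : IsIdempotentElem (symProj N d) := by
  have hsum : (∑ σ : Equiv.Perm (Fin N), permOp N d σ) * symProj N d =
      (N.factorial : ℂ) • symProj N d := by
    simp [Finset.sum_mul, permOp_mul_symProj, Fintype.card_perm, ← Nat.cast_smul_eq_nsmul ℂ]
  rw [IsIdempotentElem]
  nth_rw 1 [symProj]
  rw [Matrix.smul_mul, hsum, smul_smul, one_div,
    inv_mul_cancel₀ (by exact_mod_cast N.factorial_ne_zero), one_smul]

end PermOp

theorem Matrix.mul_self_mul_conjTranspose_eq_iff {m n R : Type*} [Fintype m] [Fintype n]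
    [PartialOrder R] [Ring R] [StarRing R] [StarOrderedRing R] [NoZeroDivisors R]
    {P : Matrix m m R} {U : Matrix m n R} : P * (U * Uᴴ) = U * Uᴴ ↔ P * U = U := by
  classical
  have h := mul_self_mul_conjTranspose_eq_zero U (P - 1)
  rwa [Matrix.sub_mul, Matrix.sub_mul, Matrix.one_mul, Matrix.one_mul, sub_eq_zero,
    sub_eq_zero] at h

/-- The reshaping of `u` into a matrix with rows indexed by the values on `S` and columns by the
values on `Sᶜ` has all its `2 × 2` minors equal to zero. -/
def RankOneAcross {ι α R : Type*} [DecidableEq ι] [Mul R] (u : (ι → α) → R) (S : Finset ι) :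
    Prop :=
  ∀ f g, u f * u g = u (S.piecewise g f) * u (S.piecewise f g)

theorem rankOneAcross_mul {ι α R : Type*} [DecidableEq ι] [CommMonoid R] {S : Finset ι}
    (v : ({i // i ∈ S} → α) → R) (w : ({i // i ∉ S} → α) → R) :
    RankOneAcross (fun f : ι → α => v (fun i => f i.1) * w (fun i => f i.1)) S := by
  have hS : ∀ p q : ι → α, (fun i : {i // i ∈ S} => S.piecewise p q i.1) = fun i => p i.1 :=
    fun p q => funext fun i => piecewise_eq_of_mem _ _ _ i.2
  have hSc : ∀ p q : ι → α, (fun i : {i // i ∉ S} => S.piecewise p q i.1) = fun i => q i.1 :=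
    fun p q => funext fun i => piecewise_eq_of_notMem _ _ _ i.2
  intro f g
  simp only [hS, hSc]
  ac_rfl

theorem symmDiff_map_swap {ι : Type*} [DecidableEq ι] {S : Finset ι} {i j : ι} (hi : i ∈ S)
    (hj : j ∉ S) : S ∆ S.map (Equiv.swap i j).toEmbedding = {i, j} := by
  ext k
  rw [mem_symmDiff, mem_map_equiv, Equiv.symm_swap, mem_insert, mem_singleton]
  by_cases hki : k = i
  · simp [hki, hi, hj]
  by_cases hkj : k = j
  · simp [hkj, hi, hj]
  simp [Equiv.swap_apply_of_ne_of_ne hki hkj, hki, hkj]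

theorem Equiv.Perm.exists_apply_eq_and_apply_eq {α : Type*} {a b c e : α} (hab : a ≠ b)
    (hce : c ≠ e) : ∃ σ : Equiv.Perm α, σ a = c ∧ σ b = e := by
  classical
  refine ⟨Equiv.swap (Equiv.swap a c b) e * Equiv.swap a c, ?_, by simp⟩
  rw [Equiv.Perm.mul_apply, Equiv.swap_apply_left]
  refine Equiv.swap_apply_of_ne_of_ne (fun h => hab ?_) hce
  simpa using congrArg (Equiv.swap a c) h

namespace RankOneAcross

variable {ι α R : Type*} [DecidableEq ι] [CommMonoid R] {u : (ι → α) → R}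

theorem symmDiff {A B : Finset ι} (hA : RankOneAcross u A) (hB : RankOneAcross u B) :
    RankOneAcross u (A ∆ B) := by
  intro f g
  rw [hA, hB]
  congr 2 <;> ext i <;> by_cases hA : i ∈ A <;> by_cases hB : i ∈ B <;>
    simp [Finset.piecewise, mem_symmDiff, hA, hB]

theorem map_perm (hsym : ∀ (σ : Equiv.Perm ι) f, u (f ∘ σ) = u f) {A : Finset ι}
    (hA : RankOneAcross u A) (σ : Equiv.Perm ι) : RankOneAcross u (A.map σ.toEmbedding) := by
  have hcomp : ∀ f g : ι → α,
      A.piecewise (f ∘ σ) (g ∘ σ) = (A.map σ.toEmbedding).piecewise f g ∘ σ := by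
    intro f g
    ext i
    by_cases hi : i ∈ A <;> simp [Finset.piecewise, hi]
  intro f g
  simpa only [hsym, hcomp] using hA (f ∘ σ) (g ∘ σ)

theorem pair (hsym : ∀ (σ : Equiv.Perm ι) f, u (f ∘ σ) = u f) {S : Finset ι}
    (hS : RankOneAcross u S) {i₀ j₀ : ι} (hi₀ : i₀ ∈ S) (hj₀ : j₀ ∉ S) {i j : ι} (hij : i ≠ j) :
    RankOneAcross u {i, j} := by
  obtain ⟨σ, rfl, rfl⟩ :=
    Equiv.Perm.exists_apply_eq_and_apply_eq (ne_of_mem_of_not_mem hi₀ hj₀) hij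
  have hT := hS.map_perm hsym σ
  rw [← symmDiff_map_swap (show σ i₀ ∈ S.map σ.toEmbedding by simpa using hi₀)
    (show σ j₀ ∉ S.map σ.toEmbedding by simpa using hj₀)]
  exact hT.symmDiff (hT.map_perm hsym _)

theorem update_mul_update {k l : ι} (h : RankOneAcross u {k, l}) (hkl : k ≠ l) {f g : ι → α}
    (hfg : f l = g l) : u f * u g = u (update f k (g k)) * u (update g k (f k)) := by
  rw [h]
  congr 2 <;> ext i <;> by_cases hik : i = k <;> by_cases hil : i = l <;>
    simp_all [Finset.piecewise]

end RankOneAcross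

section ProductForm

variable {ι α K : Type*} [DecidableEq ι] [Field K] {u : (ι → α) → K}

-- At the site `l` both `T.piecewise g f₀` and `f₀` agree, so every single-site exchange with `f₀`
-- is an exchange on a pair `{k, l}`.
theorem apply_piecewise_eq_mul_prod_of_rankOneAcross_pair
    (hpair : ∀ i j, i ≠ j → RankOneAcross u {i, j}) {f₀ : ι → α} (hf₀ : u f₀ ≠ 0)
    {T : Finset ι} {l : ι} (hl : l ∉ T) (g : ι → α) :
    u (T.piecewise g f₀) = u f₀ * ∏ k ∈ T, u (update f₀ k (g k)) / u f₀ := by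
  induction T using Finset.induction_on with
  | empty => simp
  | insert k T hkT ih =>
    rw [mem_insert, not_or] at hl
    have hex := (hpair k l (Ne.symm hl.1)).update_mul_update (Ne.symm hl.1)
      (f := (insert k T).piecewise g f₀) (g := f₀) (by simp [hl.1, hl.2])
    rw [piecewise_insert, update_idem,
      update_eq_self_iff.2 (piecewise_eq_of_notMem _ _ _ hkT).symm, update_self,
      ← piecewise_insert, ih hl.2] at hex
    rw [prod_insert hkT]
    apply mul_right_cancel₀ hf₀
    rw [hex]
    field_simp

theorem RankOneAcross.eq_mul_prod_update [Fintype ι] {S : Finset ι} (hS : RankOneAcross u S)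
    (hpair : ∀ i j, i ≠ j → RankOneAcross u {i, j}) {i₀ j₀ : ι} (hi₀ : i₀ ∈ S) (hj₀ : j₀ ∉ S)
    {f₀ : ι → α} (hf₀ : u f₀ ≠ 0) (f : ι → α) :
    u f = u f₀ * ∏ k, u (update f₀ k (f k)) / u f₀ := by
  have h := hS f f₀
  rw [← piecewise_compl,
    apply_piecewise_eq_mul_prod_of_rankOneAcross_pair hpair hf₀ (l := i₀) (by simpa) f,
    apply_piecewise_eq_mul_prod_of_rankOneAcross_pair hpair hf₀ hj₀ f] at h
  rw [← prod_mul_prod_compl S]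
  apply mul_right_cancel₀ hf₀
  linear_combination h

theorem apply_const_ne_zero_of_eq_mul_prod_update [Fintype ι]
    (hsym : ∀ (σ : Equiv.Perm ι) f, u (f ∘ σ) = u f) {f₀ : ι → α} (hf₀ : u f₀ ≠ 0)
    (hprod : ∀ f, u f = u f₀ * ∏ k, u (update f₀ k (f k)) / u f₀) (i : ι) :
    u (fun _ => f₀ i) ≠ 0 := by
  have hfactor : ∀ k, u (update f₀ k (f₀ i)) ≠ 0 := by
    intro k
    have h := hprod (f₀ ∘ Equiv.swap k i)
    rw [hsym] at h
    have := prod_ne_zero_iff.1 (right_ne_zero_of_mul (h ▸ hf₀)) k (mem_univ k)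
    simpa [hf₀] using this
  rw [hprod]
  exact mul_ne_zero hf₀ (prod_ne_zero_iff.2 fun k _ => div_ne_zero (hfactor k) hf₀)

theorem RankOneAcross.exists_eq_mul_prod [Fintype ι] [Nonempty α]
    (hsym : ∀ (σ : Equiv.Perm ι) f, u (f ∘ σ) = u f) {S : Finset ι} (hS : RankOneAcross u S)
    {i₀ j₀ : ι} (hi₀ : i₀ ∈ S) (hj₀ : j₀ ∉ S) :
    ∃ (c : K) (a : α → K), a ≠ 0 ∧ ∀ f, u f = c * ∏ i, a (f i) := by
  by_cases hu : u = 0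
  · exact ⟨0, 1, one_ne_zero, by simp [hu]⟩
  obtain ⟨f₀, hf₀⟩ : ∃ f₀, u f₀ ≠ 0 := Function.ne_iff.1 hu
  have hprod {f₀ : ι → α} (hf₀ : u f₀ ≠ 0) :=
    hS.eq_mul_prod_update (fun i j => hS.pair hsym hi₀ hj₀) hi₀ hj₀ hf₀
  set c : ι → α := fun _ => f₀ i₀
  have hc : u c ≠ 0 := apply_const_ne_zero_of_eq_mul_prod_update hsym hf₀ (hprod hf₀) i₀
  have hupdate : ∀ k t, u (update c k t) = u (update c i₀ t) := fun k t => by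
    rw [← hsym (Equiv.swap k i₀), update_comp_equiv, Equiv.symm_swap, Equiv.swap_apply_left]
    rfl
  refine ⟨u c, fun t => u (update c i₀ t) / u c, Function.ne_iff.2 ⟨f₀ i₀, ?_⟩, fun f => ?_⟩
  · simp [c, hc]
  · simp only [hprod hc f, hupdate]

end ProductForm

theorem exists_mul_conjTranspose_of_separable {ι α κ : Type*} [Fintype ι] [DecidableEq ι]
    [Fintype α] [Fintype κ] {S : Finset ι} {ρ : Matrix (ι → α) (ι → α) ℂ} {w : κ → ℝ}
    {σs : κ → Matrix ({i // i ∈ S} → α) ({i // i ∈ S} → α) ℂ}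
    {τs : κ → Matrix ({i // i ∉ S} → α) ({i // i ∉ S} → α) ℂ}
    (hw : ∀ k, 0 ≤ w k) (hσ : ∀ k, (σs k).PosSemidef) (hτ : ∀ k, (τs k).PosSemidef)
    (hρ : ∀ f g, ρ f g = ∑ k, (w k : ℂ) *
      σs k (fun i => f i.1) (fun i => g i.1) * τs k (fun i => f i.1) (fun i => g i.1)) :
    ∃ U : Matrix (ι → α) (κ × ({i // i ∈ S} → α) × ({i // i ∉ S} → α)) ℂ,
      ρ = U * Uᴴ ∧ ∀ j, RankOneAcross (fun f => U f j) S := by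
  classical
  choose B hB using fun k => CStarAlgebra.nonneg_iff_eq_star_mul_self.mp (hσ k).nonneg
  choose C hC using fun k => CStarAlgebra.nonneg_iff_eq_star_mul_self.mp (hτ k).nonneg
  refine ⟨Matrix.of fun f j => (√(w j.1) * star (B j.1 j.2.1 fun i => f i.1)) *
    star (C j.1 j.2.2 fun i => f i.1), ?_, fun j =>
    rankOneAcross_mul (fun y => √(w j.1) * star (B j.1 j.2.1 y)) (fun y => star (C j.1 j.2.2 y))⟩
  ext f g
  have hsqrt : ∀ k, (√(w k) : ℂ) * √(w k) = w k := fun k => by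
    rw [← Complex.ofReal_mul, Real.mul_self_sqrt (hw k)]
  simp only [hρ, hB, hC, Matrix.mul_apply, Matrix.conjTranspose_apply, Matrix.of_apply,
    Matrix.star_apply, Fintype.sum_prod_type, Finset.mul_sum, Finset.sum_mul, ← hsqrt]
  refine Finset.sum_congr rfl fun k _ => Finset.sum_comm.trans <|
    Finset.sum_congr rfl fun m _ => Finset.sum_congr rfl fun n _ => ?_
  simp only [star_mul', Complex.star_def, Complex.conj_ofReal, Complex.conj_conj]
  ring

theorem apply_comp_perm_of_symProj_mul_mul_symProj {N d : ℕ} {J : Type*} [Fintype J]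
    {U : Matrix (Fin N → Fin d) J ℂ} (h : symProj N d * (U * Uᴴ) * symProj N d = U * Uᴴ)
    (σ : Equiv.Perm (Fin N)) (f : Fin N → Fin d) (j : J) : U (f ∘ σ) j = U f j := by
  have hP : symProj N d * U = U := by
    refine Matrix.mul_self_mul_conjTranspose_eq_iff.1 ?_
    rw [← h, ← Matrix.mul_assoc, ← Matrix.mul_assoc, isIdempotentElem_symProj.eq]
  rw [← permOp_mul_apply σ U f j, ← hP, ← Matrix.mul_assoc, permOp_mul_symProj]

theorem exists_unit_mul_prod_star_of_eq_mul_prod {ι α : Type*} [Fintype ι] [Fintype α]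
    {u : (ι → α) → ℂ} {c : ℂ} {a : α → ℂ} (ha : a ≠ 0) (hu : ∀ f, u f = c * ∏ i, a (f i)) :
    ∃ w : ℝ, 0 ≤ w ∧ ∃ b : α → ℂ, star b ⬝ᵥ b = 1 ∧ ∀ f g,
      u f * starRingEnd ℂ (u g) = w * ((∏ i, b (f i)) * ∏ i, starRingEnd ℂ (b (g i))) := by
  set n : ℝ := ∑ t, Complex.normSq (a t)
  have hn : 0 < n := by
    obtain ⟨t, ht⟩ := Function.ne_iff.1 ha
    exact Finset.sum_pos' (fun t _ => Complex.normSq_nonneg _)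
      ⟨t, mem_univ t, Complex.normSq_pos.2 ht⟩
  have hs : (√n : ℂ) ≠ 0 := by exact_mod_cast (Real.sqrt_pos.2 hn).ne'
  have hss : (√n : ℂ) * √n = n := by rw [← Complex.ofReal_mul, Real.mul_self_sqrt hn.le]
  refine ⟨Complex.normSq c * n ^ Fintype.card ι,
    mul_nonneg (Complex.normSq_nonneg c) (pow_nonneg hn.le _), fun t => a t / √n, ?_, fun f g => ?_⟩
  · calc star (fun t => a t / √n) ⬝ᵥ (fun t => a t / √n)
        = ∑ t, (Complex.normSq (a t) : ℂ) / (√n * √n) := by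
          refine Finset.sum_congr rfl fun t _ => ?_
          simp only [Pi.star_apply, Complex.star_def, map_div₀, Complex.conj_ofReal,
            Complex.normSq_eq_conj_mul_self]
          ring
      _ = 1 := by
          rw [hss, ← Finset.sum_div, ← Complex.ofReal_sum,
            div_self (Complex.ofReal_ne_zero.2 hn.ne')]
  · simp only [hu, map_mul, map_prod, map_div₀, Complex.conj_ofReal, Finset.prod_div_distrib,
      Finset.prod_const, Finset.card_univ]
    push_cast
    rw [Complex.normSq_eq_conj_mul_self, ← hss]
    field_simp
    ring

theorem sum_prod_mul_prod_star {ι α R : Type*} [Fintype ι] [DecidableEq ι] [Fintype α]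
    [CommSemiring R] [StarRing R] (b : α → R) :
    ∑ f : ι → α, (∏ i, b (f i)) * ∏ i, star (b (f i)) = (star b ⬝ᵥ b) ^ Fintype.card ι := by
  simp_rw [← Finset.prod_mul_distrib]
  rw [← Fintype.prod_sum fun _ t => b t * star (b t), prod_const, Finset.card_univ]
  simp [dotProduct, mul_comm]

theorem exists_fin_decomposition_of_trace_eq_one {ι α J : Type*} [Fintype ι] [DecidableEq ι]
    [Fintype α] [Fintype J] {ρ : Matrix (ι → α) (ι → α) ℂ} (htr : ρ.trace = 1)
    {w : J → ℝ} {b : J → α → ℂ} (hw : ∀ j, 0 ≤ w j) (hb : ∀ j, star (b j) ⬝ᵥ b j = 1)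
    (hρ : ∀ f g, ρ f g = ∑ j, (w j : ℂ) * ((∏ i, b j (f i)) * ∏ i, starRingEnd ℂ (b j (g i)))) :
    ∃ (K : ℕ) (w : Fin K → ℝ) (a : Fin K → (α → ℂ)),
      (∀ k, 0 ≤ w k) ∧ ∑ k, w k = 1 ∧ (∀ k, star (a k) ⬝ᵥ a k = 1) ∧
      ∀ f g, ρ f g = ∑ k, (w k : ℂ) *
        ((∏ i, a k (f i)) * (∏ i, (starRingEnd ℂ) (a k (g i)))) := by
  have htrace : ρ.trace = ∑ j, (w j : ℂ) := by
    simp only [Matrix.trace, Matrix.diag, hρ, starRingEnd_apply]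
    rw [Finset.sum_comm]
    simp only [← Finset.mul_sum, sum_prod_mul_prod_star, hb, one_pow, mul_one]
  let e := (Fintype.equivFin J).symm
  refine ⟨Fintype.card J, w ∘ e, b ∘ e, fun k => hw _, ?_, fun k => hb _, fun f g => ?_⟩
  · rw [← Complex.ofReal_inj]
    push_cast
    rw [← htr, htrace, Function.comp_def, e.sum_comp (fun j => (w j : ℂ))]
  · rw [hρ, ← e.sum_comp]
    rfl

theorem symmetric_separable_is_fully_separable_general (N d : ℕ)
    (ρ : Matrix (Fin N → Fin d) (Fin N → Fin d) ℂ)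
    (htr : ρ.trace = 1)
    (hsupp : symProj N d * ρ * symProj N d = ρ)
    (S : Finset (Fin N)) (hS : S.Nonempty) (hSc : Sᶜ.Nonempty)
    (hsep : ∃ (K : ℕ) (w : Fin K → ℝ)
        (σs : Fin K → Matrix ({i // i ∈ S} → Fin d) ({i // i ∈ S} → Fin d) ℂ)
        (τs : Fin K → Matrix ({i // i ∉ S} → Fin d) ({i // i ∉ S} → Fin d) ℂ),
        (∀ k, 0 ≤ w k) ∧ ∑ k, w k = 1 ∧
        (∀ k, (σs k).PosSemidef ∧ (σs k).trace = 1) ∧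
        (∀ k, (τs k).PosSemidef ∧ (τs k).trace = 1) ∧
        ∀ f g, ρ f g = ∑ k, (w k : ℂ) *
          σs k (fun i => f i.1) (fun i => g i.1) *
          τs k (fun i => f i.1) (fun i => g i.1)) :
    ∃ (K : ℕ) (w : Fin K → ℝ) (a : Fin K → (Fin d → ℂ)),
      (∀ k, 0 ≤ w k) ∧ ∑ k, w k = 1 ∧
      (∀ k, star (a k) ⬝ᵥ a k = 1) ∧
      ∀ f g, ρ f g = ∑ k, (w k : ℂ) *
        ((∏ i, a k (f i)) * (∏ i, (starRingEnd ℂ) (a k (g i)))) := by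
  obtain ⟨i₀, hi₀⟩ := hS
  obtain ⟨j₀, hj₀⟩ := hSc
  have : Nonempty (Fin d) := by
    by_contra hd
    have : IsEmpty (Fin N → Fin d) := ⟨fun f => hd ⟨f i₀⟩⟩
    simp [Matrix.trace] at htr
  obtain ⟨K, w, σs, τs, hw, -, hσ, hτ, hρ⟩ := hsep
  obtain ⟨U, rfl, hU⟩ :=
    exists_mul_conjTranspose_of_separable hw (fun k => (hσ k).1) (fun k => (hτ k).1) hρ
  choose c a ha hca using fun j => (hU j).exists_eq_mul_prod
    (fun σ f => apply_comp_perm_of_symProj_mul_mul_symProj hsupp σ f j) hi₀ (mem_compl.1 hj₀)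
  choose v hv b hb hvb using fun j => exists_unit_mul_prod_star_of_eq_mul_prod (ha j) (hca j)
  exact exists_fin_decomposition_of_trace_eq_one htr hv hb fun f g => by
    simp [Matrix.mul_apply, hvb]

/-- A permutationally symmetric density matrix supported on the symmetric subspace
of `(ℂ^d)^⊗N` that is separable across one nontrivial bipartition `S | Sᶜ` is
fully separable, i.e., a convex combination of pure product states `|a⟩⟨a|^⊗N`. -/
theorem symmetric_separable_is_fully_separable (N d : ℕ)
    (ρ : Matrix (Fin N → Fin d) (Fin N → Fin d) ℂ)
    (hρ : ρ.PosSemidef) (htr : ρ.trace = 1)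
    (hperm : ∀ σ : Equiv.Perm (Fin N), ∀ f g, ρ (f ∘ σ) (g ∘ σ) = ρ f g)
    (hsupp : symProj N d * ρ * symProj N d = ρ)
    (S : Finset (Fin N)) (hS : S.Nonempty) (hSc : Sᶜ.Nonempty)
    (hsep : ∃ (K : ℕ) (w : Fin K → ℝ)
        (σs : Fin K → Matrix ({i // i ∈ S} → Fin d) ({i // i ∈ S} → Fin d) ℂ)
        (τs : Fin K → Matrix ({i // i ∉ S} → Fin d) ({i // i ∉ S} → Fin d) ℂ),
        (∀ k, 0 ≤ w k) ∧ ∑ k, w k = 1 ∧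
        (∀ k, (σs k).PosSemidef ∧ (σs k).trace = 1) ∧
        (∀ k, (τs k).PosSemidef ∧ (τs k).trace = 1) ∧
        ∀ f g, ρ f g = ∑ k, (w k : ℂ) *
          σs k (fun i => f i.1) (fun i => g i.1) *
          τs k (fun i => f i.1) (fun i => g i.1)) :
    ∃ (K : ℕ) (w : Fin K → ℝ) (a : Fin K → (Fin d → ℂ)),
      (∀ k, 0 ≤ w k) ∧ ∑ k, w k = 1 ∧
      (∀ k, star (a k) ⬝ᵥ a k = 1) ∧
      ∀ f g, ρ f g = ∑ k, (w k : ℂ) *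
        ((∏ i, a k (f i)) * (∏ i, (starRingEnd ℂ) (a k (g i)))) :=
  symmetric_separable_is_fully_separable_general N d ρ htr hsupp S hS hSc hsep
end
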